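/- Let f̄: Ω → ℝ be an α-Hölder normalized potential (L_{f̄} 1 ≡ 1), γ_n(A|y) = L_{f̄}^n(1_A)(σ^n(y)), and let ν be a Borel probability measure with L_{f̄}* ν = ν. Let μ be a shift-invariant Borel probability measure with H_{Λ_n}(μ|ν) < ∞ for all n. Then for every y ∈ Ω and every n ≥ 1, H_{Λ_n}(μ | ν) = H_{Λ_n}(μ | γ_n(·|y)) + ∫_Ω [ S_n(f̄)(x_{Λ_n} y_{Λ_n^c}) − log ∫_Ω exp( S_n(f̄)(x_{Λ_n} z_{Λ_n^c}) ) dν(z) ] dμ(x). -/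

import Mathlib

/-!
Iterating `L* ν = ν` gives `∫ φ dν = ∫ Lⁿ φ dν`, where
`Lⁿ φ (z) = ∫ exp (Sₙ f̄ (a z)) φ (a z) dpⁿ(a)`. Applied to functions of the first `n`
coordinates, this shows that the marginal of `ν` on `Λₙ` has the density
`G(a) = ∫ exp (Sₙ f̄ (a z)) dν(z)` with respect to `pⁿ`, while the marginal of `γₙ(·|y)` has the
density `g(a) = exp (Sₙ f̄ (a σⁿy))` by construction. Both densities are continuous and positive
on the compact space `Aⁿ`, so for the marginal `m` of `μ` we get
`H(m | G pⁿ) = H(m | pⁿ) - ∫ log G dm` and likewise for `g` (all three entropies may be `+∞`);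
subtracting gives the identity with integrand `log g - log G`.
Finally `ν` is shift-invariant, which identifies `G(x_{Λₙ})` with
`∫ exp (Sₙ f̄ (x_{Λₙ} z_{Λₙᶜ})) dν(z)`.
-/

open MeasureTheory Filter
open scoped Classical

noncomputable section

namespace Paper

variable {A : Type*} [MetricSpace A] [CompactSpace A] [MeasurableSpace A] [BorelSpace A]

/-- The left shift `σ` on `Ω = Aᴺ`. -/
def shift (x : ℕ → A) : ℕ → A := fun n => x (n + 1)

/-- Prepend a symbol: `cons a x = (a, x₀, x₁, …)`. -/
def cons (a : A) (x : ℕ → A) : ℕ → A := fun n =>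
  match n with
  | 0 => a
  | n + 1 => x n

/-- The metric `d_Ω` on `Ω`. -/
def dOmega (x y : ℕ → A) : ℝ :=
  ∑' n : ℕ, (1 / 2 : ℝ) ^ (n + 1) * (dist (x n) (y n) / (1 + dist (x n) (y n)))

/-- `f` is `α`-Hölder with respect to `d_Ω`. -/
def IsHolder (α : ℝ) (f : (ℕ → A) → ℝ) : Prop :=
  ∃ C : ℝ, 0 ≤ C ∧ ∀ x y, |f x - f y| ≤ C * dOmega x y ^ α

/-- The Ruelle transfer operator with a priori measure `p`. -/
def ruelle (p : Measure A) (f φ : (ℕ → A) → ℝ) : (ℕ → A) → ℝ :=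
  fun x => ∫ a, Real.exp (f (cons a x)) * φ (cons a x) ∂p

/-- The normalized potential `f̄ = f + log h - log (h ∘ σ) - log λ`. -/
def fbar (f h : (ℕ → A) → ℝ) (lam : ℝ) : (ℕ → A) → ℝ :=
  fun x => f x + Real.log (h x) - Real.log (h (shift x)) - Real.log lam

/-- Projection on the first `n` coordinates. -/
def proj (n : ℕ) (x : ℕ → A) : Fin n → A := fun i => x i

/-- Relative entropy `H(μ|ν)` of two measures, with value `+∞` unless
`μ ≪ ν` and the entropy integral is finite. -/
def relEnt {X : Type*} [MeasurableSpace X] (μ ν : Measure X) : EReal :=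
  if μ ≪ ν ∧ Integrable (fun x => Real.log (μ.rnDeriv ν x).toReal) μ then
    ((∫ x, Real.log (μ.rnDeriv ν x).toReal ∂μ : ℝ) : EReal)
  else ⊤

/-- Relative entropy `H_{Λ_n}(μ|ν)` on the σ-algebra of the first `n` coordinates. -/
def relEntN (n : ℕ) (μ ν : Measure (ℕ → A)) : EReal :=
  relEnt (μ.map (proj n)) (ν.map (proj n))

/-- The entropy `H_{Λ_n}(μ) = -H_{Λ_n}(μ | pᴺ)` relative to the a priori measure `p`. -/
def finEnt (p : Measure A) (μ : Measure (ℕ → A)) (n : ℕ) : EReal :=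
  - relEnt (μ.map (proj n)) (Measure.pi fun _ : Fin n => p)

/-- The specific entropy `h^s(μ) = lim_n H_{Λ_n}(μ)/n` (defined as a `limsup`,
which coincides with the limit whenever the latter exists). -/
def specEnt (p : Measure A) (μ : Measure (ℕ → A)) : EReal :=
  Filter.atTop.limsup fun n : ℕ => ((n : ℝ)⁻¹ : EReal) * finEnt p μ n

/-- Birkhoff sum `S_n(f)`. -/
def birkhoff (n : ℕ) (f : (ℕ → A) → ℝ) (x : ℕ → A) : ℝ :=
  ∑ i ∈ Finset.range n, f (shift^[i] x)

/-- The configuration `x_{Λ_n} y_{Λ_n^c}`. -/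
def concatAt (n : ℕ) (x y : ℕ → A) : ℕ → A := fun i => if i < n then x i else y i

/-- Concatenation of a finite word with a configuration. -/
def wordCons (n : ℕ) (a : Fin n → A) (x : ℕ → A) : ℕ → A :=
  fun i => if h : i < n then a ⟨i, h⟩ else x (i - n)

/-- The probability kernel `γ_n(·|y) = L_f^n(1_·)(σ^n y)`, realized concretely as the
image under `a ↦ a ⬝ σ^n(y)` of the measure on `A^n` with density
`a ↦ exp(S_n(f)(a ⬝ σ^n(y)))` with respect to `p^n`. -/
def gammaMeasure (p : Measure A) (f : (ℕ → A) → ℝ) (n : ℕ) (y : ℕ → A) :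
    Measure (ℕ → A) :=
  Measure.map (fun a : Fin n → A => wordCons n a (shift^[n] y))
    ((Measure.pi fun _ : Fin n => p).withDensity
      fun a => ENNReal.ofReal (Real.exp (birkhoff n f (wordCons n a (shift^[n] y)))))

end Paper

open scoped Topology

namespace Paper

section Words

variable {A : Type*}

@[simp]
lemma shift_cons (a : A) (x : ℕ → A) : shift (cons a x) = x := rfl

lemma shift_iterate_apply (n : ℕ) (x : ℕ → A) (i : ℕ) : shift^[n] x i = x (i + n) := by
  induction n generalizing x with
  | zero => rfl
  | succ n ih => rw [Function.iterate_succ_apply, ih]; rfl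

@[simp]
lemma proj_wordCons (n : ℕ) (a : Fin n → A) (x : ℕ → A) : proj n (wordCons n a x) = a := by
  funext i
  simp [proj, wordCons]

@[simp]
lemma shift_iterate_wordCons (n : ℕ) (a : Fin n → A) (x : ℕ → A) :
    shift^[n] (wordCons n a x) = x := by
  funext i
  simp [shift_iterate_apply, wordCons]

lemma wordCons_proj_shift_iterate (n : ℕ) (x y : ℕ → A) :
    wordCons n (proj n x) (shift^[n] y) = concatAt n x y := by
  funext i
  by_cases h : i < n
  · simp [wordCons, concatAt, h, proj]
  · simp [wordCons, concatAt, h, shift_iterate_apply, Nat.sub_add_cancel (not_lt.1 h)]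

@[simp]
lemma wordCons_zero (a : Fin 0 → A) (x : ℕ → A) : wordCons 0 a x = x := by
  funext i
  simp [wordCons]

lemma cons_wordCons (n : ℕ) (b : A) (a : Fin n → A) (x : ℕ → A) :
    cons b (wordCons n a x) = wordCons (n + 1) (Fin.cons b a) x := by
  funext i
  cases i with
  | zero => simp [cons, wordCons]
  | succ i =>
    by_cases h : i < n
    · simp only [cons, wordCons, h, Nat.succ_lt_succ h, dif_pos]
      exact (Fin.cons_succ (α := fun _ => A) b a ⟨i, h⟩).symm
    · simp [cons, wordCons, h]

lemma birkhoff_succ (n : ℕ) (f : (ℕ → A) → ℝ) (x : ℕ → A) :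
    birkhoff (n + 1) f x = birkhoff n f (shift x) + f x := by
  simp [birkhoff, Finset.sum_range_succ', Function.iterate_succ_apply]

variable [MeasurableSpace A]

lemma measurable_proj (n : ℕ) : Measurable (proj (A := A) n) :=
  measurable_pi_lambda _ fun i => measurable_pi_apply (i : ℕ)

lemma measurable_wordCons_left (n : ℕ) (x : ℕ → A) :
    Measurable fun a : Fin n → A => wordCons n a x := by
  refine measurable_pi_lambda _ fun i => ?_
  by_cases h : i < n
  · simpa [wordCons, h] using measurable_pi_apply (⟨i, h⟩ : Fin n)
  · simp [wordCons, h]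

end Words

section Topology

variable {A : Type*} [TopologicalSpace A]

@[fun_prop]
lemma continuous_shift : Continuous (shift (A := A)) :=
  continuous_pi fun n => continuous_apply (n + 1)

@[fun_prop]
lemma continuous_proj (n : ℕ) : Continuous (proj (A := A) n) :=
  continuous_pi fun i => continuous_apply (i : ℕ)

@[fun_prop]
lemma Continuous.cons {X : Type*} [TopologicalSpace X] {a : X → A} {x : X → ℕ → A}
    (ha : Continuous a) (hx : Continuous x) : Continuous fun t => cons (a t) (x t) :=
  continuous_pi fun
    | 0 => ha
    | i + 1 => (continuous_apply i).comp hx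

@[fun_prop]
lemma Continuous.wordCons {X : Type*} [TopologicalSpace X] {n : ℕ} {a : X → Fin n → A}
    {x : X → ℕ → A} (ha : Continuous a) (hx : Continuous x) :
    Continuous fun t => wordCons n (a t) (x t) := by
  refine continuous_pi fun i => ?_
  by_cases h : i < n <;> simp only [Paper.wordCons, h, dite_true, dite_false] <;> fun_prop

@[fun_prop]
lemma continuous_birkhoff (n : ℕ) {f : (ℕ → A) → ℝ} (hf : Continuous f) :
    Continuous (birkhoff n f) :=
  continuous_finsetSum _ fun i _ => hf.comp (continuous_shift.iterate i)

end Topology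

section Holder

variable {A : Type*} [MetricSpace A]

lemma continuous_dOmega (x : ℕ → A) : Continuous (dOmega x) := by
  refine continuous_tsum (u := fun n : ℕ => (1 / 2 : ℝ) ^ (n + 1)) (fun i => ?_) ?_ fun n y => ?_
  · have hd : Continuous fun y : ℕ → A => dist (x i) (y i) := by fun_prop
    exact continuous_const.mul (hd.div (continuous_const.add hd) fun y => by positivity)
  · exact (summable_geometric_two.mul_left (1 / 2)).congr fun n => by ring
  · have hd : dist (x n) (y n) / (1 + dist (x n) (y n)) ≤ 1 :=
      (div_le_one (by positivity)).2 (by linarith)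
    rw [Real.norm_eq_abs, abs_of_nonneg (by positivity)]
    exact mul_le_of_le_one_right (by positivity) hd

lemma IsHolder.continuous {α : ℝ} (hα : 0 < α) {f : (ℕ → A) → ℝ} (hf : IsHolder α f) :
    Continuous f := by
  obtain ⟨C, -, hC⟩ := hf
  refine continuous_iff_continuousAt.2 fun x => tendsto_iff_dist_tendsto_zero.2 ?_
  have hlim : Tendsto (fun y => C * dOmega x y ^ α) (𝓝 x) (𝓝 0) := by
    have := (((continuous_dOmega x).rpow_const fun _ => Or.inr hα.le).const_mul C).tendsto x
    simpa [dOmega, Real.zero_rpow hα.ne'] using this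
  exact squeeze_zero (fun _ => dist_nonneg) (fun y => (abs_sub_comm _ _).trans_le (hC x y)) hlim

end Holder

section CompactSpace

variable {X : Type*} [TopologicalSpace X] [CompactSpace X] [MeasurableSpace X]

lemma _root_.Continuous.integrable_of_compactSpace [OpensMeasurableSpace X] {E : Type*}
    [NormedAddCommGroup E] {μ : Measure X} [IsFiniteMeasure μ] {g : X → E} (hg : Continuous g) :
    Integrable g μ :=
  hg.integrable_of_hasCompactSupport (.of_compactSpace g)

lemma _root_.Continuous.integral_of_compactSpace [OpensMeasurableSpace X]
    [SecondCountableTopologyEither X ℝ] {Y : Type*} [TopologicalSpace Y] [FirstCountableTopology Y]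
    [LocallyCompactSpace Y] {μ : Measure X} [IsFiniteMeasure μ] {F : Y → X → ℝ}
    (hF : Continuous (Function.uncurry F)) : Continuous fun t => ∫ x, F t x ∂μ := by
  simpa using continuous_parametric_integral_of_continuous (μ := μ) hF isCompact_univ

end CompactSpace

lemma ext_of_forall_continuous_integral_eq {X : Type*} [TopologicalSpace X] [MeasurableSpace X]
    [HasOuterApproxClosed X] [BorelSpace X]
    {μ ν : Measure X} [IsFiniteMeasure μ] [IsFiniteMeasure ν]
    (h : ∀ g : X → ℝ, Continuous g → ∫ x, g x ∂μ = ∫ x, g x ∂ν) : μ = ν :=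
  ext_of_forall_integral_eq_of_IsFiniteMeasure fun g => h g g.continuous

lemma integral_pi_fin_succ {α : Type*} [MeasurableSpace α] (μ : Measure α) [SigmaFinite μ]
    {n : ℕ} {F : (Fin (n + 1) → α) → ℝ} (hF : Integrable F (Measure.pi fun _ => μ)) :
    ∫ c, F c ∂(Measure.pi fun _ => μ) = ∫ a, ∫ b, F (Fin.cons b a) ∂μ ∂(Measure.pi fun _ => μ) := by
  have he := (measurePreserving_piFinSuccAbove (fun _ : Fin (n + 1) => μ) 0).symm
  have hcons : ∀ q : α × (Fin n → α),
      (MeasurableEquiv.piFinSuccAbove (fun _ => α) 0).symm q = Fin.cons q.1 q.2 := fun q => by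
    simp [MeasurableEquiv.piFinSuccAbove_symm_apply, Fin.insertNthEquiv, Fin.insertNth_zero']
  rw [← he.integral_comp', integral_prod_symm]
  · simp only [hcons]
  · exact (he.integrable_comp_emb (MeasurableEquiv.measurableEmbedding _)).2 hF

lemma ruelle_iterate_one {A : Type*} [MeasurableSpace A] {p : Measure A} {f : (ℕ → A) → ℝ}
    (hnorm : ∀ x, ruelle p f (fun _ => 1) x = 1) (n : ℕ) :
    (ruelle p f)^[n] (fun _ => 1) = fun _ => 1 :=
  Function.iterate_fixed (funext hnorm) n

def marginalDensity {A : Type*} [MeasurableSpace A] (ν : Measure (ℕ → A)) (f : (ℕ → A) → ℝ)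
    (n : ℕ) (a : Fin n → A) : ℝ :=
  ∫ z, Real.exp (birkhoff n f (wordCons n a z)) ∂ν

section Transfer

variable {A : Type*} [MetricSpace A] [CompactSpace A] [MeasurableSpace A] [BorelSpace A]
  (p : Measure A) [IsFiniteMeasure p] {f : (ℕ → A) → ℝ}

lemma continuous_ruelle (hf : Continuous f) {φ : (ℕ → A) → ℝ} (hφ : Continuous φ) :
    Continuous (ruelle p f φ) :=
  Continuous.integral_of_compactSpace (F := fun x a => Real.exp (f (cons a x)) * φ (cons a x))
    (by fun_prop)

lemma ruelle_iterate_apply (hf : Continuous f) (n : ℕ) {φ : (ℕ → A) → ℝ} (hφ : Continuous φ)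
    (x : ℕ → A) :
    (ruelle p f)^[n] φ x = ∫ a, Real.exp (birkhoff n f (wordCons n a x)) * φ (wordCons n a x)
      ∂(Measure.pi fun _ : Fin n => p) := by
  induction n generalizing φ with
  | zero => simp [birkhoff, measureReal_def]
  | succ n ih =>
    have hstep : ∀ a : Fin n → A, Real.exp (birkhoff n f (wordCons n a x)) *
        ruelle p f φ (wordCons n a x) = ∫ b, Real.exp (birkhoff (n + 1) f
          (wordCons (n + 1) (Fin.cons b a) x)) * φ (wordCons (n + 1) (Fin.cons b a) x) ∂p := by
      intro a
      simp only [ruelle, ← integral_const_mul, ← cons_wordCons, birkhoff_succ, shift_cons,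
        Real.exp_add, mul_assoc]
    rw [Function.iterate_succ_apply, ih (continuous_ruelle p hf hφ), integral_pi_fin_succ p
      (Continuous.integrable_of_compactSpace (by fun_prop))]
    simp only [hstep]

lemma integral_exp_birkhoff_wordCons (hf : Continuous f)
    (hnorm : ∀ x, ruelle p f (fun _ => 1) x = 1) (n : ℕ) (x : ℕ → A) :
    ∫ a, Real.exp (birkhoff n f (wordCons n a x)) ∂(Measure.pi fun _ : Fin n => p) = 1 := by
  simpa using (ruelle_iterate_apply p hf n continuous_const x).symm.trans
    (congrFun (ruelle_iterate_one hnorm n) x)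

variable (ν : Measure (ℕ → A))

lemma integral_ruelle_iterate (hf : Continuous f)
    (hν : ∀ φ : (ℕ → A) → ℝ, Continuous φ → ∫ x, ruelle p f φ x ∂ν = ∫ x, φ x ∂ν)
    (n : ℕ) {φ : (ℕ → A) → ℝ} (hφ : Continuous φ) :
    ∫ x, (ruelle p f)^[n] φ x ∂ν = ∫ x, φ x ∂ν := by
  induction n generalizing φ with
  | zero => rfl
  | succ n ih => rw [Function.iterate_succ_apply, ih (continuous_ruelle p hf hφ), hν φ hφ]

/-- `L^n (ψ ∘ σ^n) = ψ · L^n 1 = ψ`, so an `L*`-invariant measure is `σ`-invariant. -/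
lemma map_shift_iterate_eq (hf : Continuous f) (hnorm : ∀ x, ruelle p f (fun _ => 1) x = 1)
    (hν : ∀ φ : (ℕ → A) → ℝ, Continuous φ → ∫ x, ruelle p f φ x ∂ν = ∫ x, φ x ∂ν)
    [IsFiniteMeasure ν] (n : ℕ) : ν.map shift^[n] = ν := by
  refine ext_of_forall_continuous_integral_eq fun ψ hψ => ?_
  have hσ : Continuous (shift (A := A))^[n] := continuous_shift.iterate n
  have hL : ∀ x, (ruelle p f)^[n] (ψ ∘ shift^[n]) x = ψ x := fun x => by
    simp [ruelle_iterate_apply p hf n (hψ.comp hσ), integral_mul_const,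
      integral_exp_birkhoff_wordCons p hf hnorm]
  calc ∫ x, ψ x ∂(ν.map shift^[n]) = ∫ x, (ψ ∘ shift^[n]) x ∂ν :=
        integral_map hσ.aemeasurable hψ.aestronglyMeasurable
    _ = ∫ x, (ruelle p f)^[n] (ψ ∘ shift^[n]) x ∂ν :=
        (integral_ruelle_iterate p ν hf hν n (hψ.comp hσ)).symm
    _ = ∫ x, ψ x ∂ν := by simp only [hL]

lemma continuous_marginalDensity [IsFiniteMeasure ν] (hf : Continuous f) (n : ℕ) :
    Continuous (marginalDensity ν f n) :=
  Continuous.integral_of_compactSpace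
    (F := fun (a : Fin n → A) z => Real.exp (birkhoff n f (wordCons n a z))) (by fun_prop)

lemma marginalDensity_pos [IsFiniteMeasure ν] [NeZero ν] (hf : Continuous f) (n : ℕ)
    (a : Fin n → A) : 0 < marginalDensity ν f n a :=
  integral_exp_pos (Continuous.integrable_of_compactSpace (by fun_prop))

lemma map_proj_eq_withDensity_marginalDensity [IsFiniteMeasure ν] (hf : Continuous f)
    (hν : ∀ φ : (ℕ → A) → ℝ, Continuous φ → ∫ x, ruelle p f φ x ∂ν = ∫ x, φ x ∂ν) (n : ℕ) :
    ν.map (proj n) = (Measure.pi fun _ : Fin n => p).withDensity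
      fun a => ENNReal.ofReal (marginalDensity ν f n a) := by
  have hG := continuous_marginalDensity ν hf n
  have : IsFiniteMeasure ((Measure.pi fun _ : Fin n => p).withDensity
      fun a => ENNReal.ofReal (marginalDensity ν f n a)) :=
    isFiniteMeasure_withDensity_ofReal (hG.integrable_of_compactSpace).hasFiniteIntegral
  refine ext_of_forall_continuous_integral_eq fun ψ hψ => ?_
  have hψn : Continuous (ψ ∘ proj n) := hψ.comp (continuous_proj n)
  calc ∫ a, ψ a ∂(ν.map (proj n))
      = ∫ x, (ruelle p f)^[n] (ψ ∘ proj n) x ∂ν :=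
        (integral_map (continuous_proj n).aemeasurable hψ.aestronglyMeasurable).trans
          (integral_ruelle_iterate p ν hf hν n hψn).symm
    _ = ∫ z, ∫ a, Real.exp (birkhoff n f (wordCons n a z)) * ψ a
          ∂(Measure.pi fun _ : Fin n => p) ∂ν := by
        simp only [ruelle_iterate_apply p hf n hψn, Function.comp_apply, proj_wordCons]
    _ = ∫ a, ∫ z, Real.exp (birkhoff n f (wordCons n a z)) * ψ a ∂ν
          ∂(Measure.pi fun _ : Fin n => p) :=
        integral_integral_swap (Continuous.integrable_of_compactSpace (by fun_prop))
    _ = ∫ a, marginalDensity ν f n a * ψ a ∂(Measure.pi fun _ : Fin n => p) := by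
        simp only [marginalDensity, integral_mul_const]
    _ = _ := by
        rw [integral_withDensity_eq_integral_toReal_smul hG.measurable.ennreal_ofReal
          (ae_of_all _ fun _ => ENNReal.ofReal_lt_top)]
        simp only [ENNReal.toReal_ofReal (integral_nonneg fun _ => (Real.exp_pos _).le),
          smul_eq_mul, marginalDensity]

lemma integral_exp_birkhoff_concatAt (hf : Continuous f) {n : ℕ} (hσ : ν.map shift^[n] = ν)
    (x : ℕ → A) :
    ∫ z, Real.exp (birkhoff n f (concatAt n x z)) ∂ν = marginalDensity ν f n (proj n x) := by
  have hg : Continuous fun w => Real.exp (birkhoff n f (wordCons n (proj n x) w)) := by fun_prop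
  simp_rw [← wordCons_proj_shift_iterate]
  conv_rhs => rw [marginalDensity, ← hσ]
  exact (integral_map (continuous_shift.iterate n).aemeasurable hg.aestronglyMeasurable).symm

end Transfer

lemma map_proj_gammaMeasure {A : Type*} [MeasurableSpace A] (p : Measure A)
    (f : (ℕ → A) → ℝ) (n : ℕ) (y : ℕ → A) :
    (gammaMeasure p f n y).map (proj n) = (Measure.pi fun _ : Fin n => p).withDensity
      fun a => ENNReal.ofReal (Real.exp (birkhoff n f (wordCons n a (shift^[n] y)))) := by
  rw [gammaMeasure, Measure.map_map (measurable_proj n) (measurable_wordCons_left n _)]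
  simp [Function.comp_def]

lemma _root_.EReal.sub_coe_eq_sub_coe_add (a : EReal) (b c : ℝ) :
    a - c = a - b + ((b - c : ℝ) : EReal) := by
  induction a using EReal.rec with
  | bot => simp
  | coe a => norm_cast; ring
  | top => rw [EReal.top_sub_coe, EReal.top_sub_coe, EReal.top_add_coe]

section RelativeEntropy

variable {X : Type*} [MeasurableSpace X] {m base : Measure X} [SigmaFinite m] [SigmaFinite base]
  {G : X → ℝ}

lemma llr_withDensity_ofReal (hm : m ≪ base) (hG : Measurable G) (hGpos : ∀ x, 0 < G x) :
    llr m (base.withDensity fun x => ENNReal.ofReal (G x))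
      =ᵐ[m] fun x => llr m base x - Real.log (G x) := by
  have hrn := Measure.rnDeriv_withDensity_right m base hG.ennreal_ofReal.aemeasurable
    (ae_of_all _ fun x => by simp [hGpos x]) (ae_of_all _ fun _ => ENNReal.ofReal_ne_top)
  filter_upwards [hm.ae_le hrn, Measure.rnDeriv_pos hm, hm.ae_le (Measure.rnDeriv_lt_top m base)]
    with x hx hpos hlt
  simp only [llr_def]
  rw [hx, ENNReal.toReal_mul, ENNReal.toReal_inv,
    ENNReal.toReal_ofReal (hGpos x).le, Real.log_mul (inv_ne_zero (hGpos x).ne')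
    (ENNReal.toReal_pos hpos.ne' hlt.ne).ne', Real.log_inv]
  ring

lemma relEnt_withDensity_ofReal (hG : Measurable G) (hGpos : ∀ x, 0 < G x)
    (hGint : Integrable (fun x => Real.log (G x)) m) :
    relEnt m (base.withDensity fun x => ENNReal.ofReal (G x))
      = relEnt m base - ((∫ x, Real.log (G x) ∂m : ℝ) : EReal) := by
  have hac : m ≪ base.withDensity (fun x => ENNReal.ofReal (G x)) ↔ m ≪ base :=
    ⟨fun h => h.trans (withDensity_absolutelyContinuous _ _), fun h => h.trans
      (withDensity_absolutelyContinuous' hG.ennreal_ofReal.aemeasurable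
        (ae_of_all _ fun x => by simp [hGpos x]))⟩
  rw [relEnt, relEnt, ← llr_def, ← llr_def, hac]
  by_cases hm : m ≪ base
  · have hllr := llr_withDensity_ofReal hm hG hGpos
    have hint : Integrable (llr m (base.withDensity fun x => ENNReal.ofReal (G x))) m ↔
        Integrable (llr m base) m :=
      ⟨fun h => (h.add hGint).congr (by filter_upwards [hllr] with x hx; simp [hx]),
        fun h => (h.sub hGint).congr hllr.symm⟩
    simp only [hm, hint, true_and]
    split_ifs with h
    · rw [integral_congr_ae hllr, integral_sub h hGint, EReal.coe_sub]
    · simp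
  · simp [hm]

lemma relEnt_withDensity_ofReal_eq_add {g : X → ℝ} (hG : Measurable G) (hGpos : ∀ x, 0 < G x)
    (hGint : Integrable (fun x => Real.log (G x)) m) (hg : Measurable g) (hgpos : ∀ x, 0 < g x)
    (hgint : Integrable (fun x => Real.log (g x)) m) :
    relEnt m (base.withDensity fun x => ENNReal.ofReal (G x))
      = relEnt m (base.withDensity fun x => ENNReal.ofReal (g x))
        + ((∫ x, (Real.log (g x) - Real.log (G x)) ∂m : ℝ) : EReal) := by
  rw [relEnt_withDensity_ofReal hG hGpos hGint, relEnt_withDensity_ofReal hg hgpos hgint,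
    integral_sub hgint hGint]
  exact EReal.sub_coe_eq_sub_coe_add _ _ _

end RelativeEntropy

variable {A : Type*} [MetricSpace A] [CompactSpace A] [MeasurableSpace A] [BorelSpace A]

theorem statement10_general
    (p : Measure A) [IsProbabilityMeasure p]
    (α : ℝ) (hα0 : 0 < α)
    (f : (ℕ → A) → ℝ) (hf : IsHolder α f)
    (hnorm : ∀ x, ruelle p f (fun _ => 1) x = 1)
    (ν : Measure (ℕ → A)) [IsProbabilityMeasure ν]
    (hν : ∀ φ : (ℕ → A) → ℝ, Continuous φ →
      ∫ x, ruelle p f φ x ∂ν = ∫ x, φ x ∂ν)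
    (μ : Measure (ℕ → A)) [IsProbabilityMeasure μ]
    (y : ℕ → A) (n : ℕ) :
    relEntN n μ ν
      = relEntN n μ (gammaMeasure p f n y)
        + ((∫ x, (birkhoff n f (concatAt n x y)
            - Real.log (∫ z, Real.exp (birkhoff n f (concatAt n x z)) ∂ν)) ∂μ : ℝ) : EReal) := by
  have hfc := hf.continuous hα0
  have hGpos := marginalDensity_pos ν hfc n
  have hG := continuous_marginalDensity ν hfc n
  have hg : Continuous fun a : Fin n → A =>
      Real.exp (birkhoff n f (wordCons n a (shift^[n] y))) := by
    fun_prop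
  have hlogG := hG.log fun a => (hGpos a).ne'
  have hlogg := hg.log fun _ => (Real.exp_pos _).ne'
  have hσ := map_shift_iterate_eq p ν hfc hnorm hν n
  rw [relEntN, relEntN, map_proj_eq_withDensity_marginalDensity p ν hfc hν n,
    map_proj_gammaMeasure,
    relEnt_withDensity_ofReal_eq_add hG.measurable hGpos hlogG.integrable_of_compactSpace
      hg.measurable (fun _ => Real.exp_pos _) hlogg.integrable_of_compactSpace]
  congr 2
  refine (integral_map (measurable_proj n).aemeasurable ?_).trans (integral_congr_ae ?_)
  · exact (hlogg.sub hlogG).aestronglyMeasurable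
  · filter_upwards with x
    rw [Real.log_exp, wordCons_proj_shift_iterate, integral_exp_birkhoff_concatAt ν hfc hσ]

/-- Let `f̄` be an `α`-Hölder normalized potential,
`γ_n(·|y) = L_{f̄}^n(1_·)(σ^n y)`, and `ν` a Borel probability measure with `L_{f̄}* ν = ν`.
If `μ` is shift-invariant with `H_{Λ_n}(μ|ν) < ∞` for all `n`, then for every `y` and `n ≥ 1`,
`H_{Λ_n}(μ|ν) = H_{Λ_n}(μ|γ_n(·|y))
  + ∫ [S_n(f̄)(x_{Λ_n} y_{Λ_n^c}) - log ∫ exp(S_n(f̄)(x_{Λ_n} z_{Λ_n^c})) dν(z)] dμ(x)`. -/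
theorem statement10
    (p : Measure A) [IsProbabilityMeasure p]
    (hsupp : ∀ U : Set A, IsOpen U → U.Nonempty → 0 < p U)
    (α : ℝ) (hα0 : 0 < α) (hα1 : α < 1)
    (f : (ℕ → A) → ℝ) (hf : IsHolder α f)
    (hnorm : ∀ x, ruelle p f (fun _ => 1) x = 1)
    (ν : Measure (ℕ → A)) [IsProbabilityMeasure ν]
    (hν : ∀ φ : (ℕ → A) → ℝ, Continuous φ →
      ∫ x, ruelle p f φ x ∂ν = ∫ x, φ x ∂ν)
    (μ : Measure (ℕ → A)) [IsProbabilityMeasure μ]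
    (hinv : μ.map shift = μ)
    (hfin : ∀ m : ℕ, relEntN m μ ν ≠ ⊤)
    (y : ℕ → A) (n : ℕ) (hn : 1 ≤ n) :
    relEntN n μ ν
      = relEntN n μ (gammaMeasure p f n y)
        + ((∫ x, (birkhoff n f (concatAt n x y)
            - Real.log (∫ z, Real.exp (birkhoff n f (concatAt n x z)) ∂ν)) ∂μ : ℝ) : EReal) :=
  statement10_general p α hα0 f hf hnorm ν hν μ y n

end Paper
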